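/- arXiv:quant-ph/0406139 — 2 statements merged into one kernel-verified Lean document; each statement's English description precedes it below -/
import Mathlib

section
/- For every d ≥ 3, the matrix R^{(d)} = (1/d⁴)·I + (6/(d²(d−2)))·Q_d^{(−)} on ℂ^d⊗ℂ^d⊗ℂ^d is positive semidefinite and its partial traces over each of the three tensor factors all equal the Werner state ρ_W^{(d)}; consequently the Werner state ρ_W^{(d)} is a Bell class state for every d ≥ 3. -/
/-!
The antisymmetrizer `Q = (1/6) Σ sgn π · P_π` is the signed average of the unitary representation
`π ↦ P_π` of `S₃`, hence a Hermitian idempotent, hence positive semidefinite; so `R` is a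
nonnegative combination of `1` and `Q`. Both commute with every `P_σ`, and conjugating by `P_σ`
relabels the tensor factors, so all three partial traces of `R` coincide. For the third one,
`tr₃ P_π` is `d·1` or `d·V` when `π` fixes the third factor and `1` or `V` otherwise, whence
`tr₃ Q = ((d - 2)/6)(1 - V)` and `tr₃ R = ((d + 1)/d³)·1 - V/d²`, the Werner state; it is a
density matrix as a partial trace of the positive `R`.
-/

open Matrix
open scoped Kronecker ComplexOrder

namespace BellPaper

variable {α β γ : Type*} [Fintype α] [Fintype β] [Fintype γ]

/-- Partial trace over the first factor of a threefold tensor product. -/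
noncomputable def ptr1 (T : Matrix ((α × β) × γ) ((α × β) × γ) ℂ) :
    Matrix (β × γ) (β × γ) ℂ :=
  fun p q => ∑ i : α, T ((i, p.1), p.2) ((i, q.1), q.2)

/-- Partial trace over the second factor of a threefold tensor product. -/
noncomputable def ptr2 (T : Matrix ((α × β) × γ) ((α × β) × γ) ℂ) :
    Matrix (α × γ) (α × γ) ℂ :=
  fun p q => ∑ j : β, T ((p.1, j), p.2) ((q.1, j), q.2)

/-- Partial trace over the third factor of a threefold tensor product. -/
noncomputable def ptr3 (T : Matrix ((α × β) × γ) ((α × β) × γ) ℂ) :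
    Matrix (α × β) (α × β) ℂ :=
  fun p q => ∑ k : γ, T (p, k) (q, k)

/-- Partial trace over the second factor of a twofold tensor product. -/
noncomputable def ptrB (M : Matrix (α × β) (α × β) ℂ) : Matrix α α ℂ :=
  fun i i' => ∑ j : β, M (i, j) (i', j)

/-- A density matrix: positive semidefinite with unit trace. -/
def IsDensityMatrix {n : Type*} [Fintype n] (ρ : Matrix n n ℂ) : Prop :=
  ρ.PosSemidef ∧ ρ.trace = 1

/-- Source-operator of type `T₁₂₂` for a state on ℂ^{d₁}⊗ℂ^{d₂}. -/
def IsSource122 {d₁ d₂ : ℕ} (ρ : Matrix (Fin d₁ × Fin d₂) (Fin d₁ × Fin d₂) ℂ)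
    (T : Matrix ((Fin d₁ × Fin d₂) × Fin d₂) ((Fin d₁ × Fin d₂) × Fin d₂) ℂ) : Prop :=
  T.IsHermitian ∧ ptr2 T = ρ ∧ ptr3 T = ρ

/-- Source-operator of type `T₁₁₂` for a state on ℂ^{d₁}⊗ℂ^{d₂}. -/
def IsSource112 {d₁ d₂ : ℕ} (ρ : Matrix (Fin d₁ × Fin d₂) (Fin d₁ × Fin d₂) ℂ)
    (S : Matrix ((Fin d₁ × Fin d₁) × Fin d₂) ((Fin d₁ × Fin d₁) × Fin d₂) ℂ) : Prop :=
  S.IsHermitian ∧ ptr1 S = ρ ∧ ptr2 S = ρ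

/-- A DSO state: a density matrix admitting a positive semidefinite source-operator. -/
def IsDSO {d₁ d₂ : ℕ} (ρ : Matrix (Fin d₁ × Fin d₂) (Fin d₁ × Fin d₂) ℂ) : Prop :=
  IsDensityMatrix ρ ∧
    ((∃ T, T.PosSemidef ∧ IsSource122 ρ T) ∨ (∃ S, S.PosSemidef ∧ IsSource112 ρ S))

/-- A Bell class state: a density matrix admitting a density source-operator with the
special dilation property (all three partial traces equal the state). -/
def IsBellClass {d : ℕ} (ρ : Matrix (Fin d × Fin d) (Fin d × Fin d) ℂ) : Prop :=
  IsDensityMatrix ρ ∧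
    ∃ T : Matrix ((Fin d × Fin d) × Fin d) ((Fin d × Fin d) × Fin d) ℂ,
      T.PosSemidef ∧ ptr1 T = ρ ∧ ptr2 T = ρ ∧ ptr3 T = ρ

/-- The operator (spectral) norm of a matrix acting on a Euclidean space. -/
noncomputable def opNorm {n : Type*} [Fintype n] [DecidableEq n] (W : Matrix n n ℂ) : ℝ :=
  ‖Matrix.toEuclideanCLM (𝕜 := ℂ) W‖

/-- The swap (permutation) operator `V_d` on ℂ^d ⊗ ℂ^d. -/
noncomputable def swapMat (d : ℕ) : Matrix (Fin d × Fin d) (Fin d × Fin d) ℂ :=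
  fun p q => if p.1 = q.2 ∧ p.2 = q.1 then 1 else 0

/-- The Werner state on ℂ^d ⊗ ℂ^d. -/
noncomputable def werner (d : ℕ) : Matrix (Fin d × Fin d) (Fin d × Fin d) ℂ :=
  (((d : ℂ) + 1) / (d : ℂ) ^ 3) • (1 : Matrix (Fin d × Fin d) (Fin d × Fin d) ℂ)
    - ((d : ℂ) ^ 2)⁻¹ • swapMat d

/-- The triple of indices of a point of the threefold product. -/
def triple {d : ℕ} (p : (Fin d × Fin d) × Fin d) : Fin 3 → Fin d := ![p.1.1, p.1.2, p.2]

/-- The unitary permuting the three tensor factors of ℂ^d ⊗ ℂ^d ⊗ ℂ^d according to π. -/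
noncomputable def permMat (d : ℕ) (π : Equiv.Perm (Fin 3)) :
    Matrix ((Fin d × Fin d) × Fin d) ((Fin d × Fin d) × Fin d) ℂ :=
  fun p q => if ∀ i, triple p (π i) = triple q i then 1 else 0

/-- The antisymmetrization projection `Q_d^{(-)}` on ℂ^d ⊗ ℂ^d ⊗ ℂ^d. -/
noncomputable def antisym (d : ℕ) :
    Matrix ((Fin d × Fin d) × Fin d) ((Fin d × Fin d) × Fin d) ℂ :=
  (6 : ℂ)⁻¹ • ∑ π : Equiv.Perm (Fin 3), (((Equiv.Perm.sign π : ℤ) : ℂ)) • permMat d π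

/-- Tensor product of two vectors. -/
def tens {m n : Type*} (u : m → ℂ) (v : n → ℂ) : m × n → ℂ := fun p => u p.1 * v p.2

/-- The rank-one operator |v⟩⟨v|. -/
noncomputable def outer {n : Type*} (v : n → ℂ) : Matrix n n ℂ :=
  Matrix.vecMulVec v (star v)

section SignedAverage

variable {G n : Type*} [Group G] [Fintype G] [Fintype n] [DecidableEq n]

noncomputable def signedAverage (ρ : G →* Matrix n n ℂ) (χ : G →* ℤˣ) : Matrix n n ℂ :=
  (Fintype.card G : ℂ)⁻¹ • ∑ g, ((χ g : ℤ) : ℂ) • ρ g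

variable (ρ : G →* Matrix n n ℂ) (χ : G →* ℤˣ)

theorem intCast_units_mul_self (u : ℤˣ) : ((u : ℤ) : ℂ) * (u : ℤ) = 1 := by
  norm_cast; simp

theorem mul_signedAverage (h : G) :
    ρ h * signedAverage ρ χ = ((χ h : ℤ) : ℂ) • signedAverage ρ χ := by
  rw [signedAverage, Matrix.mul_smul, smul_comm ((χ h : ℤ) : ℂ)]
  congr 1
  rw [Finset.mul_sum, Finset.smul_sum]
  apply Fintype.sum_equiv (Equiv.mulLeft h)
  intro g
  simp [smul_smul, ← mul_assoc, intCast_units_mul_self]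

theorem signedAverage_mul (h : G) :
    signedAverage ρ χ * ρ h = ((χ h : ℤ) : ℂ) • signedAverage ρ χ := by
  rw [signedAverage, Matrix.smul_mul, smul_comm ((χ h : ℤ) : ℂ)]
  congr 1
  rw [Finset.sum_mul, Finset.smul_sum]
  apply Fintype.sum_equiv (Equiv.mulRight h)
  intro g
  simp [smul_smul, mul_comm, ← mul_assoc, intCast_units_mul_self]

theorem commute_signedAverage (h : G) : Commute (ρ h) (signedAverage ρ χ) :=
  (mul_signedAverage ρ χ h).trans (signedAverage_mul ρ χ h).symm

theorem signedAverage_mul_self : signedAverage ρ χ * signedAverage ρ χ = signedAverage ρ χ := by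
  conv_lhs => enter [1]; rw [signedAverage]
  simp only [Matrix.smul_mul, Finset.sum_mul, mul_signedAverage, smul_smul,
    intCast_units_mul_self, one_smul, Finset.sum_const, Finset.card_univ,
    ← Nat.cast_smul_eq_nsmul ℂ]
  rw [inv_mul_cancel₀ (by simp), one_smul]

theorem signedAverage_isHermitian (hρ : ∀ g, (ρ g)ᴴ = ρ g⁻¹) :
    (signedAverage ρ χ).IsHermitian := by
  simp only [IsHermitian, signedAverage, conjTranspose_smul, conjTranspose_sum, hρ, star_inv₀,
    star_natCast, star_intCast]
  congr 1
  exact Fintype.sum_equiv (Equiv.inv G) _ _ fun g => by simp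

theorem signedAverage_posSemidef (hρ : ∀ g, (ρ g)ᴴ = ρ g⁻¹) :
    (signedAverage ρ χ).PosSemidef := by
  rw [← signedAverage_mul_self]
  nth_rw 1 [← (signedAverage_isHermitian ρ χ hρ).eq]
  exact posSemidef_conjTranspose_mul_self _

end SignedAverage

section PermuteFactors

variable {d : ℕ}

def tripleEquiv : ((Fin d × Fin d) × Fin d) ≃ (Fin 3 → Fin d) where
  toFun := triple
  invFun f := ((f 0, f 1), f 2)
  left_inv _ := rfl
  right_inv f := by ext i; fin_cases i <;> rfl

variable (d) in
def permuteFactors (σ : Equiv.Perm (Fin 3)) :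
    ((Fin d × Fin d) × Fin d) ≃ ((Fin d × Fin d) × Fin d) where
  toFun p := tripleEquiv.symm (tripleEquiv p ∘ σ)
  invFun p := tripleEquiv.symm (tripleEquiv p ∘ σ.symm)
  left_inv p := by simp [Function.comp_assoc]
  right_inv p := by simp [Function.comp_assoc]

theorem permuteFactors_mul (π σ : Equiv.Perm (Fin 3)) :
    permuteFactors d (π * σ) = (permuteFactors d π).trans (permuteFactors d σ) := by
  ext p : 1
  simp [permuteFactors, Function.comp_assoc]

theorem permuteFactors_inv (σ : Equiv.Perm (Fin 3)) :
    permuteFactors d σ⁻¹ = (permuteFactors d σ).symm := rfl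

theorem permMat_eq_toMatrix (σ : Equiv.Perm (Fin 3)) :
    permMat d σ = (permuteFactors d σ).toPEquiv.toMatrix := by
  ext p q
  simp only [permMat, PEquiv.toMatrix_apply, Equiv.toPEquiv_apply, Option.mem_def,
    Option.some.injEq, permuteFactors, Equiv.coe_fn_mk, Equiv.symm_apply_eq, funext_iff]
  rfl

end PermuteFactors

section Antisymmetrizer

variable {d : ℕ}

theorem permMat_one : permMat d 1 = 1 := by
  have : permuteFactors d 1 = Equiv.refl _ := rfl
  rw [permMat_eq_toMatrix, this, Equiv.toPEquiv_refl, PEquiv.toMatrix_refl]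

theorem permMat_mul (π σ : Equiv.Perm (Fin 3)) : permMat d (π * σ) = permMat d π * permMat d σ := by
  rw [permMat_eq_toMatrix, permMat_eq_toMatrix, permMat_eq_toMatrix, permuteFactors_mul,
    Equiv.toPEquiv_trans, PEquiv.toMatrix_trans]

theorem conjTranspose_permMat (σ : Equiv.Perm (Fin 3)) : (permMat d σ)ᴴ = permMat d σ⁻¹ := by
  rw [permMat_eq_toMatrix, permMat_eq_toMatrix, permuteFactors_inv, Equiv.toPEquiv_symm,
    PEquiv.toMatrix_symm]
  ext
  simp [PEquiv.toMatrix_apply, apply_ite star]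

variable (d) in
noncomputable def permMatHom : Equiv.Perm (Fin 3) →*
    Matrix ((Fin d × Fin d) × Fin d) ((Fin d × Fin d) × Fin d) ℂ where
  toFun := permMat d
  map_one' := permMat_one
  map_mul' := permMat_mul

theorem antisym_eq_signedAverage : antisym d = signedAverage (permMatHom d) Equiv.Perm.sign := by
  have : Fintype.card (Equiv.Perm (Fin 3)) = 6 := by simp [Fintype.card_perm]; rfl
  rw [antisym, signedAverage, this]
  norm_num
  rfl

theorem antisym_posSemidef : (antisym d).PosSemidef := by
  rw [antisym_eq_signedAverage]
  exact signedAverage_posSemidef _ _ conjTranspose_permMat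

theorem commute_permMat_antisym (σ : Equiv.Perm (Fin 3)) : Commute (permMat d σ) (antisym d) := by
  rw [antisym_eq_signedAverage]
  exact commute_signedAverage (permMatHom d) _ σ

end Antisymmetrizer

theorem submatrix_eq_self_of_commute {n R : Type*} [Fintype n] [DecidableEq n] [Semiring R]
    {A : Matrix n n R} (e : n ≃ n) (h : Commute e.toPEquiv.toMatrix A) : A.submatrix e e = A := by
  have h' : A.submatrix e id = A.submatrix id e.symm := by
    rw [← PEquiv.toMatrix_toPEquiv_mul, ← PEquiv.mul_toMatrix_toPEquiv, h.eq]
  calc A.submatrix e e = (A.submatrix e id).submatrix id e := rfl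
    _ = A := by
      rw [h', submatrix_submatrix, Function.id_comp, Equiv.symm_comp_self, submatrix_id_id]

section Symmetric

variable {d : ℕ} {T : Matrix ((Fin d × Fin d) × Fin d) ((Fin d × Fin d) × Fin d) ℂ}

theorem submatrix_permuteFactors (hT : ∀ σ, Commute (permMat d σ) T) (σ : Equiv.Perm (Fin 3)) :
    T.submatrix (permuteFactors d σ) (permuteFactors d σ) = T :=
  submatrix_eq_self_of_commute _ (permMat_eq_toMatrix σ ▸ hT σ)

theorem ptr1_eq_ptr3_of_commute (hT : ∀ σ, Commute (permMat d σ) T) : ptr1 T = ptr3 T := by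
  -- `permuteFactors d (finRotate 3)` sends `((a, b), c)` to `((b, c), a)`
  conv_lhs => rw [← submatrix_permuteFactors hT (finRotate 3)]
  rfl

theorem ptr2_eq_ptr3_of_commute (hT : ∀ σ, Commute (permMat d σ) T) : ptr2 T = ptr3 T := by
  -- `permuteFactors d (Equiv.swap 1 2)` sends `((a, b), c)` to `((a, c), b)`
  conv_lhs => rw [← submatrix_permuteFactors hT (Equiv.swap 1 2)]
  rfl

end Symmetric

section PartialTrace

theorem ptr3_add {α β γ : Type*} [Fintype γ] (A B : Matrix ((α × β) × γ) ((α × β) × γ) ℂ) :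
    ptr3 (A + B) = ptr3 A + ptr3 B := by
  ext p q; simp [ptr3, Finset.sum_add_distrib]

theorem ptr3_sub {α β γ : Type*} [Fintype γ] (A B : Matrix ((α × β) × γ) ((α × β) × γ) ℂ) :
    ptr3 (A - B) = ptr3 A - ptr3 B := by
  ext p q; simp [ptr3, Finset.sum_sub_distrib]

theorem ptr3_smul {α β γ : Type*} [Fintype γ] (c : ℂ) (A : Matrix ((α × β) × γ) ((α × β) × γ) ℂ) :
    ptr3 (c • A) = c • ptr3 A := by
  ext p q; simp [ptr3, Finset.mul_sum]

theorem ptr3_one {α β γ : Type*} [Fintype γ] [DecidableEq α] [DecidableEq β] [DecidableEq γ] :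
    ptr3 (1 : Matrix ((α × β) × γ) ((α × β) × γ) ℂ) = (Fintype.card γ : ℂ) • 1 := by
  ext p q; by_cases h : p = q <;> simp [ptr3, one_apply, h]

theorem ptr3_eq_sum_submatrix {α β γ : Type*} [Fintype γ]
    (T : Matrix ((α × β) × γ) ((α × β) × γ) ℂ) : ptr3 T = ∑ k, T.submatrix (·, k) (·, k) := by
  ext p q; simp [ptr3, Matrix.sum_apply]

theorem posSemidef_ptr3 {α β γ : Type*} [Fintype γ] {T : Matrix ((α × β) × γ) ((α × β) × γ) ℂ}
    (hT : T.PosSemidef) : (ptr3 T).PosSemidef := by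
  rw [ptr3_eq_sum_submatrix]
  exact posSemidef_sum _ fun k _ => hT.submatrix _

end PartialTrace

open Equiv in
theorem sum_sign_smul_perm_fin_three {M : Type*} [AddCommGroup M] [Module ℂ M]
    (f : Perm (Fin 3) → M) :
    ∑ π, ((Perm.sign π : ℤ) : ℂ) • f π = f 1 - f (swap 0 1) - f (swap 0 2) - f (swap 1 2)
      + f (finRotate 3) + f (finRotate 3 * finRotate 3) := by
  have : (Finset.univ : Finset (Perm (Fin 3))) =
      {1, swap 0 1, swap 0 2, swap 1 2, finRotate 3, finRotate 3 * finRotate 3} := by decide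
  rw [this]
  simp +decide [Finset.sum_insert]
  abel

section Werner

variable {d : ℕ}

theorem ptr3_permMat_swap_zero_one : ptr3 (permMat d (Equiv.swap 0 1)) = (d : ℂ) • swapMat d := by
  ext ⟨a, b⟩ ⟨a', b'⟩
  simp [ptr3, permMat, Fin.forall_fin_succ, triple, Equiv.swap_apply_def, ite_and,
    Finset.sum_ite_irrel, -Finset.sum_boole, swapMat]
  grind

theorem ptr3_permMat_swap_zero_two : ptr3 (permMat d (Equiv.swap 0 2)) = 1 := by
  ext ⟨a, b⟩ ⟨a', b'⟩
  simp [ptr3, permMat, Fin.forall_fin_succ, triple, Equiv.swap_apply_def, ite_and,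
    -Finset.sum_boole, one_apply]
  grind

theorem ptr3_permMat_swap_one_two : ptr3 (permMat d (Equiv.swap 1 2)) = 1 := by
  ext ⟨a, b⟩ ⟨a', b'⟩
  simp [ptr3, permMat, Fin.forall_fin_succ, triple, Equiv.swap_apply_def, ite_and,
    Finset.sum_ite_irrel, -Finset.sum_boole, one_apply]

theorem ptr3_permMat_finRotate : ptr3 (permMat d (finRotate 3)) = swapMat d := by
  ext ⟨a, b⟩ ⟨a', b'⟩
  simp [ptr3, permMat, Fin.forall_fin_succ, triple, ite_and, Finset.sum_ite_irrel,
    -Finset.sum_boole, swapMat]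
  grind

theorem ptr3_permMat_finRotate_mul_self :
    ptr3 (permMat d (finRotate 3 * finRotate 3)) = swapMat d := by
  ext ⟨a, b⟩ ⟨a', b'⟩
  simp [ptr3, permMat, Fin.forall_fin_succ, triple, ite_and, -Finset.sum_boole, swapMat]

theorem ptr3_antisym : ptr3 (antisym d) = (((d : ℂ) - 2) / 6) • (1 - swapMat d) := by
  rw [antisym, sum_sign_smul_perm_fin_three]
  simp only [ptr3_smul, ptr3_add, ptr3_sub, permMat_one, ptr3_one, Fintype.card_fin,
    ptr3_permMat_swap_zero_one, ptr3_permMat_swap_zero_two, ptr3_permMat_swap_one_two,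
    ptr3_permMat_finRotate, ptr3_permMat_finRotate_mul_self]
  module

theorem trace_swapMat : (swapMat d).trace = d := by
  simp only [trace, diag, swapMat, Fintype.sum_prod_type, and_iff_left_of_imp Eq.symm]
  simp

theorem trace_werner (hd : d ≠ 0) : (werner d).trace = 1 := by
  have hd0 : (d : ℂ) ≠ 0 := Nat.cast_ne_zero.mpr hd
  rw [werner, trace_sub, trace_smul, trace_smul, trace_one, trace_swapMat]
  simp
  field_simp
  ring

end Werner

/-- for d ≥ 3, `R^{(d)} = (1/d⁴)·I + (6/(d²(d-2)))·Q_d^{(-)}` is a density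
source-operator for the Werner state with the special dilation property, and hence the
Werner state is a Bell class state. -/
theorem werner_isBellClass (d : ℕ) (hd : 3 ≤ d)
    (R : Matrix ((Fin d × Fin d) × Fin d) ((Fin d × Fin d) × Fin d) ℂ)
    (hR : R = ((d : ℂ) ^ 4)⁻¹ • (1 : Matrix ((Fin d × Fin d) × Fin d) ((Fin d × Fin d) × Fin d) ℂ)
        + (6 / ((d : ℂ) ^ 2 * ((d : ℂ) - 2))) • antisym d) :
    R.PosSemidef ∧ ptr1 R = werner d ∧ ptr2 R = werner d ∧ ptr3 R = werner d
      ∧ IsBellClass (werner d) := by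
  have hsub : (d : ℂ) - 2 = ((d - 2 : ℕ) : ℂ) := by
    push_cast [Nat.cast_sub (by omega : 2 ≤ d)]; ring
  have hpsd : R.PosSemidef := by
    rw [hR, hsub]
    exact (PosSemidef.one.smul (by positivity)).add (antisym_posSemidef.smul (by positivity))
  have hsymm : ∀ σ, Commute (permMat d σ) R := fun σ =>
    hR ▸ ((Commute.one_right _).smul_right _).add_right ((commute_permMat_antisym σ).smul_right _)
  have h₃ : ptr3 R = werner d := by
    have hd0 : (d : ℂ) ≠ 0 := by exact_mod_cast (by omega : d ≠ 0)
    have hd2 : (d : ℂ) - 2 ≠ 0 := by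
      rw [hsub]; exact_mod_cast (by omega : d - 2 ≠ 0)
    rw [hR, ptr3_add, ptr3_smul, ptr3_smul, ptr3_one, ptr3_antisym, werner, Fintype.card_fin]
    match_scalars <;> field_simp
    ring
  have h₁ := (ptr1_eq_ptr3_of_commute hsymm).trans h₃
  have h₂ := (ptr2_eq_ptr3_of_commute hsymm).trans h₃
  have hdens : IsDensityMatrix (werner d) := ⟨h₃ ▸ posSemidef_ptr3 hpsd, trace_werner (by omega)⟩
  exact ⟨hpsd, h₁, h₂, h₃, hdens, R, hpsd, h₁, h₂, h₃⟩

end BellPaper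
end

section
/- Let ρ be a density matrix on ℂ^{d₁}⊗ℂ^{d₂} and T a source-operator of type T₁₁₂ for ρ with T ≠ 0, and set σ_T = tr^{(3)}[|T|] / ‖T‖₁, a density matrix on ℂ^{d₁}⊗ℂ^{d₁}. Then for all Hermitian matrices A₁, A₂ on ℂ^{d₁} and W₂ on ℂ^{d₂} with operator norms at most 1: |tr[ρ(A₁⊗W₂)] − tr[ρ(A₂⊗W₂)]| ≤ ‖T‖₁ · (1 − tr[σ_T (A₁⊗A₂)]). -/
open Matrix
open scoped Kronecker ComplexOrder

/-!
Put `X = (A₁ ⊗ 1 - 1 ⊗ A₂) ⊗ W₂` and `Y = 1 - (A₁ ⊗ A₂) ⊗ 1`. The two marginal conditions on `S`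
turn the left side into `|tr (S X)|`, and `ptr3` turns the right side into `tr (|S| Y)`.
Both `|S| ± S` and `Y ± X` are positive semidefinite, the latter because `2 (Y ∓ X)` is a sum of
tensor products of the positive operators `1 ± A₁`, `1 ± A₂`, `1 ± W₂` (a CHSH-type
decomposition). Hence `tr (|S| Y) ∓ tr (S X) = ½ tr ((|S| ± S)(Y ∓ X)) + ½ tr ((|S| ∓ S)(Y ± X))`
is nonnegative, because the trace of a product of positive semidefinite matrices is nonnegative.
-/

section
open scoped Kronecker ComplexOrder MatrixOrder Matrix.Norms.L2Operator

lemma Complex.norm_le_re_of_nonneg_sub_of_nonneg_add {a b : ℂ} (h₁ : 0 ≤ a - b)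
    (h₂ : 0 ≤ a + b) : ‖b‖ ≤ a.re := by
  rw [Complex.nonneg_iff] at h₁ h₂
  simp only [Complex.sub_re, Complex.sub_im, Complex.add_re, Complex.add_im] at h₁ h₂
  have hb : b = (b.re : ℂ) := Complex.ext rfl (by rw [Complex.ofReal_im]; linarith [h₁.2, h₂.2])
  rw [hb, Complex.norm_real, Real.norm_eq_abs, abs_le]
  constructor <;> linarith [h₁.1, h₂.1]

lemma Complex.re_mul_one_sub_re_inv_mul {c t : ℂ} (hc : 0 ≤ c) (ht : c = 0 → t = 0) :
    c.re * (1 - (c⁻¹ * t).re) = (c - t).re := by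
  obtain rfl | hc₀ := eq_or_ne c 0
  · simp [ht rfl]
  obtain ⟨r, rfl⟩ : ∃ r : ℝ, c = r :=
    ⟨c.re, Complex.eq_re_of_ofReal_le (r := 0) (by simpa using hc)⟩
  have hr : r ≠ 0 := by exact_mod_cast hc₀
  rw [← Complex.ofReal_inv, Complex.re_ofReal_mul, Complex.ofReal_re, Complex.sub_re,
    Complex.ofReal_re]
  field_simp

variable {l m n : Type*} [Fintype n]

lemma Matrix.PosSemidef.trace_mul_nonneg {A B : Matrix n n ℂ} (hA : A.PosSemidef)
    (hB : B.PosSemidef) : 0 ≤ (A * B).trace := by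
  classical
  obtain ⟨C, rfl⟩ := CStarAlgebra.nonneg_iff_eq_star_mul_self.mp hB.nonneg
  rw [← Matrix.mul_assoc, Matrix.trace_mul_comm, ← Matrix.mul_assoc, star_eq_conjTranspose]
  exact (hA.mul_mul_conjTranspose_same C).trace_nonneg

lemma Matrix.norm_trace_mul_le_re_trace_mul {P S X Y : Matrix n n ℂ}
    (hPS : (P - S).PosSemidef) (hPS' : (P + S).PosSemidef)
    (hYX : (Y - X).PosSemidef) (hYX' : (Y + X).PosSemidef) :
    ‖(S * X).trace‖ ≤ (P * Y).trace.re := by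
  have key : ∀ X' : Matrix n n ℂ, (Y - X').PosSemidef → (Y + X').PosSemidef →
      0 ≤ (P * Y).trace - (S * X').trace := fun X' h h' => by
    have e : (P * Y).trace - (S * X').trace
        = 2⁻¹ * (((P + S) * (Y - X')).trace + ((P - S) * (Y + X')).trace) := by
      simp only [Matrix.add_mul, Matrix.sub_mul, Matrix.mul_add, Matrix.mul_sub,
        Matrix.trace_add, Matrix.trace_sub]
      ring
    rw [e]
    exact mul_nonneg (by positivity)
      (add_nonneg (hPS'.trace_mul_nonneg h) (hPS.trace_mul_nonneg h'))
  refine Complex.norm_le_re_of_nonneg_sub_of_nonneg_add (key X hYX hYX') ?_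
  have h := key (-X) (by rwa [sub_neg_eq_add]) (by rwa [← sub_eq_add_neg])
  rwa [Matrix.mul_neg, Matrix.trace_neg, sub_neg_eq_add] at h

variable [DecidableEq n]

lemma Matrix.IsHermitian.posSemidef_sub_and_add_of_mul_self_eq {S P : Matrix n n ℂ}
    (hS : S.IsHermitian) (hP : P.PosSemidef) (hPS : P * P = S * S) :
    (P - S).PosSemidef ∧ (P + S).PosSemidef := by
  have hS' : IsSelfAdjoint S := hS
  have hP_abs : P = CFC.abs S := by
    refine (CFC.mul_self_eq_mul_self_iff P (CFC.abs S) hP.nonneg (CFC.abs_nonneg S)).mp ?_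
    rw [CFC.abs_mul_abs, hPS, hS'.star_eq]
  subst hP_abs
  rw [← Matrix.nonneg_iff_posSemidef, ← Matrix.nonneg_iff_posSemidef, CFC.abs_sub_self S,
    CFC.abs_add_self S]
  exact ⟨smul_nonneg zero_le_two (CFC.negPart_nonneg S),
    smul_nonneg zero_le_two (CFC.posPart_nonneg S)⟩

lemma Matrix.IsHermitian.posSemidef_one_sub_of_opNorm_le_one {W : Matrix n n ℂ}
    (hW : W.IsHermitian) (hW₁ : BellPaper.opNorm W ≤ 1) : (1 - W).PosSemidef := by
  rw [← Matrix.le_iff]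
  calc W ≤ algebraMap ℝ _ ‖W‖ := IsSelfAdjoint.le_algebraMap_norm_self hW
    _ ≤ algebraMap ℝ _ 1 := algebraMap_mono _ hW₁
    _ = 1 := map_one _

lemma Matrix.IsHermitian.posSemidef_one_add_of_opNorm_le_one {W : Matrix n n ℂ}
    (hW : W.IsHermitian) (hW₁ : BellPaper.opNorm W ≤ 1) : (1 + W).PosSemidef := by
  rw [← sub_neg_eq_add]
  refine hW.neg.posSemidef_one_sub_of_opNorm_le_one ?_
  rwa [BellPaper.opNorm, map_neg, norm_neg]

variable [Fintype l] [Fintype m] [DecidableEq l] [DecidableEq m]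

lemma Matrix.posSemidef_one_sub_kronecker_sub {A : Matrix l l ℂ} {B : Matrix m m ℂ}
    {W : Matrix n n ℂ} (hA : (1 - A).PosSemidef) (hA' : (1 + A).PosSemidef)
    (hB : (1 - B).PosSemidef) (hB' : (1 + B).PosSemidef)
    (hW : (1 - W).PosSemidef) (hW' : (1 + W).PosSemidef) :
    (1 - (A ⊗ₖ B) ⊗ₖ (1 : Matrix n n ℂ)
      - ((A ⊗ₖ (1 : Matrix m m ℂ)) ⊗ₖ W - ((1 : Matrix l l ℂ) ⊗ₖ B) ⊗ₖ W)).PosSemidef := by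
  have decomp : (2 : ℂ) • (1 - (A ⊗ₖ B) ⊗ₖ (1 : Matrix n n ℂ)
      - ((A ⊗ₖ (1 : Matrix m m ℂ)) ⊗ₖ W - ((1 : Matrix l l ℂ) ⊗ₖ B) ⊗ₖ W))
      = ((1 - A) ⊗ₖ (1 + B)) ⊗ₖ (1 + W) + ((1 + A) ⊗ₖ (1 - B)) ⊗ₖ (1 - W) := by
    ext ⟨⟨i, j⟩, k⟩ ⟨⟨i', j'⟩, k'⟩
    simp only [Matrix.smul_apply, Matrix.sub_apply, Matrix.add_apply,
      Matrix.kroneckerMap_apply, Matrix.one_apply, Prod.mk.injEq, smul_eq_mul]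
    split_ifs <;> simp_all <;> ring
  rw [← inv_smul_smul₀ (two_ne_zero (α := ℂ)) (_ - _), decomp]
  exact (((hA.kronecker hB').kronecker hW').add ((hA'.kronecker hB).kronecker hW)).smul
    (by positivity)

lemma Matrix.posSemidef_one_sub_kronecker_sub_and_add {A : Matrix l l ℂ} {B : Matrix m m ℂ}
    {W : Matrix n n ℂ} (hA : A.IsHermitian) (hB : B.IsHermitian) (hW : W.IsHermitian)
    (hA₁ : BellPaper.opNorm A ≤ 1) (hB₁ : BellPaper.opNorm B ≤ 1)
    (hW₁ : BellPaper.opNorm W ≤ 1) :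
    (1 - (A ⊗ₖ B) ⊗ₖ (1 : Matrix n n ℂ)
      - ((A ⊗ₖ (1 : Matrix m m ℂ)) ⊗ₖ W - ((1 : Matrix l l ℂ) ⊗ₖ B) ⊗ₖ W)).PosSemidef ∧
    (1 - (A ⊗ₖ B) ⊗ₖ (1 : Matrix n n ℂ)
      + ((A ⊗ₖ (1 : Matrix m m ℂ)) ⊗ₖ W - ((1 : Matrix l l ℂ) ⊗ₖ B) ⊗ₖ W)).PosSemidef := by
  have hW_sub := hW.posSemidef_one_sub_of_opNorm_le_one hW₁
  have hW_add := hW.posSemidef_one_add_of_opNorm_le_one hW₁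
  have key := fun V : Matrix n n ℂ ↦ Matrix.posSemidef_one_sub_kronecker_sub (W := V)
    (hA.posSemidef_one_sub_of_opNorm_le_one hA₁) (hA.posSemidef_one_add_of_opNorm_le_one hA₁)
    (hB.posSemidef_one_sub_of_opNorm_le_one hB₁) (hB.posSemidef_one_add_of_opNorm_le_one hB₁)
  refine ⟨key W hW_sub hW_add, ?_⟩
  have kronecker_neg : ∀ M : Matrix (l × m) (l × m) ℂ, M ⊗ₖ (-W) = -(M ⊗ₖ W) := fun M => by
    ext; simp
  convert key (-W) (by rwa [sub_neg_eq_add]) (by rwa [← sub_eq_add_neg]) using 1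
  rw [kronecker_neg, kronecker_neg]
  abel

end

namespace BellPaper
open scoped Kronecker
variable {α β γ : Type*} [Fintype α] [Fintype β] [Fintype γ]

lemma trace_ptr1_mul [DecidableEq α] (S : Matrix ((α × β) × γ) ((α × β) × γ) ℂ)
    (B : Matrix β β ℂ) (W : Matrix γ γ ℂ) :
    (ptr1 S * (B ⊗ₖ W)).trace = (S * (((1 : Matrix α α ℂ) ⊗ₖ B) ⊗ₖ W)).trace := by
  simp [Matrix.trace, Matrix.mul_apply, ptr1, Matrix.one_apply, Fintype.sum_prod_type,
    Finset.sum_mul, Finset.sum_comm (γ := α)]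

lemma trace_ptr2_mul [DecidableEq β] (S : Matrix ((α × β) × γ) ((α × β) × γ) ℂ)
    (A : Matrix α α ℂ) (W : Matrix γ γ ℂ) :
    (ptr2 S * (A ⊗ₖ W)).trace = (S * ((A ⊗ₖ (1 : Matrix β β ℂ)) ⊗ₖ W)).trace := by
  simp [Matrix.trace, Matrix.mul_apply, ptr2, Matrix.one_apply, Fintype.sum_prod_type,
    Finset.sum_mul, Finset.sum_comm (γ := β)]

lemma trace_ptr3_mul [DecidableEq γ] (M : Matrix ((α × β) × γ) ((α × β) × γ) ℂ)
    (K : Matrix (α × β) (α × β) ℂ) :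
    (ptr3 M * K).trace = (M * (K ⊗ₖ (1 : Matrix γ γ ℂ))).trace := by
  simp [Matrix.trace, Matrix.mul_apply, ptr3, Matrix.one_apply, Fintype.sum_prod_type,
    Finset.sum_mul, Finset.sum_comm (γ := γ)]

/-- `Sabs` is |S| (the positive semidefinite square root of `S * S`), so `Sabs.trace` is ‖S‖₁
and `(Sabs.trace)⁻¹ • ptr3 Sabs` is σ_S. -/
theorem bell_form_inequality_112_general {d₁ d₂ : ℕ}
    (ρ : Matrix (Fin d₁ × Fin d₂) (Fin d₁ × Fin d₂) ℂ)
    (S Sabs : Matrix ((Fin d₁ × Fin d₁) × Fin d₂) ((Fin d₁ × Fin d₁) × Fin d₂) ℂ)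
    (hS : IsSource112 ρ S)
    (habs : Sabs.PosSemidef ∧ Sabs * Sabs = S * S)
    (A₁ A₂ : Matrix (Fin d₁) (Fin d₁) ℂ) (W₂ : Matrix (Fin d₂) (Fin d₂) ℂ)
    (hA₁ : A₁.IsHermitian) (hA₂ : A₂.IsHermitian) (hW₂ : W₂.IsHermitian)
    (hnA₁ : opNorm A₁ ≤ 1) (hnA₂ : opNorm A₂ ≤ 1) (hnW₂ : opNorm W₂ ≤ 1) :
    ‖(ρ * (A₁ ⊗ₖ W₂)).trace - (ρ * (A₂ ⊗ₖ W₂)).trace‖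
      ≤ Sabs.trace.re *
        (1 - (((Sabs.trace)⁻¹ • ptr3 Sabs * (A₁ ⊗ₖ A₂)).trace).re) := by
  obtain ⟨hS_herm, hρ₁, hρ₂⟩ := hS
  obtain ⟨hSabs, hSabs_sq⟩ := habs
  have hlhs : (ρ * (A₁ ⊗ₖ W₂)).trace - (ρ * (A₂ ⊗ₖ W₂)).trace
      = (S * ((A₁ ⊗ₖ 1) ⊗ₖ W₂ - (1 ⊗ₖ A₂) ⊗ₖ W₂)).trace := by
    rw [Matrix.mul_sub, Matrix.trace_sub, ← trace_ptr2_mul, ← trace_ptr1_mul, hρ₁, hρ₂]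
  have hrhs : Sabs.trace.re * (1 - (((Sabs.trace)⁻¹ • ptr3 Sabs * (A₁ ⊗ₖ A₂)).trace).re)
      = (Sabs * (1 - (A₁ ⊗ₖ A₂) ⊗ₖ 1)).trace.re := by
    rw [Matrix.smul_mul, Matrix.trace_smul, smul_eq_mul, trace_ptr3_mul, Matrix.mul_sub,
      Matrix.mul_one, Matrix.trace_sub]
    refine Complex.re_mul_one_sub_re_inv_mul hSabs.trace_nonneg fun h ↦ ?_
    simp [hSabs.trace_eq_zero_iff.mp h]
  obtain ⟨hYX, hYX'⟩ :=
    Matrix.posSemidef_one_sub_kronecker_sub_and_add hA₁ hA₂ hW₂ hnA₁ hnA₂ hnW₂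
  obtain ⟨hPS, hPS'⟩ := hS_herm.posSemidef_sub_and_add_of_mul_self_eq hSabs hSabs_sq
  rw [hlhs, hrhs]
  exact Matrix.norm_trace_mul_le_re_trace_mul hPS hPS' hYX hYX'

/-- the quantum Bell-form inequality (21) with a source-operator of type
`T₁₁₂`. `Sabs` is the absolute value |S|, `Sabs.trace` the trace norm ‖S‖₁ and
`(Sabs.trace)⁻¹ • ptr3 Sabs` the density matrix `σ_S`. -/
theorem bell_form_inequality_112 {d₁ d₂ : ℕ}
    (ρ : Matrix (Fin d₁ × Fin d₂) (Fin d₁ × Fin d₂) ℂ) (hρ : IsDensityMatrix ρ)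
    (S Sabs : Matrix ((Fin d₁ × Fin d₁) × Fin d₂) ((Fin d₁ × Fin d₁) × Fin d₂) ℂ)
    (hS : IsSource112 ρ S) (hS0 : S ≠ 0)
    (habs : Sabs.PosSemidef ∧ Sabs * Sabs = S * S)
    (A₁ A₂ : Matrix (Fin d₁) (Fin d₁) ℂ) (W₂ : Matrix (Fin d₂) (Fin d₂) ℂ)
    (hA₁ : A₁.IsHermitian) (hA₂ : A₂.IsHermitian) (hW₂ : W₂.IsHermitian)
    (hnA₁ : opNorm A₁ ≤ 1) (hnA₂ : opNorm A₂ ≤ 1) (hnW₂ : opNorm W₂ ≤ 1) :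
    ‖(ρ * (A₁ ⊗ₖ W₂)).trace - (ρ * (A₂ ⊗ₖ W₂)).trace‖
      ≤ Sabs.trace.re *
        (1 - (((Sabs.trace)⁻¹ • ptr3 Sabs * (A₁ ⊗ₖ A₂)).trace).re) :=
  bell_form_inequality_112_general ρ S Sabs hS habs A₁ A₂ W₂ hA₁ hA₂ hW₂ hnA₁ hnA₂ hnW₂

end BellPaper
end
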